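/- arXiv:1206.0550 — 9 statements merged into one kernel-verified Lean document; each statement's English description precedes it below -/
import Mathlib

section
/- Let X be a finite topological space. Then X is a connected space if and only if the simple graph on X, in which two distinct points x and y are adjacent if and only if x ∈ closure {y} or y ∈ closure {x}, is a connected graph. -/
/-- The underlying simple graph of a relation: distinct `x, y` are adjacent iff
`R x y` or `R y x`. -/
def underGraph {V : Type*} (R : V → V → Prop) : SimpleGraph V where
  Adj x y := x ≠ y ∧ (R x y ∨ R y x)
  symm := ⟨fun _ _ h => ⟨h.1.symm, h.2.symm⟩⟩
  loopless := ⟨fun _ h => h.1 rfl⟩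

/-!
Adjacent points of the graph specialize one to the other, and a point lies in the same connected
component as each of its specializations, so a connected graph forces a connected space. In a
finite space the topology is Alexandrov-discrete: a set is open as soon as it is closed under
generalization. The reachability class of a point is closed under both specialization and
generalization, hence clopen, hence everything when the space is connected.
-/

open SimpleGraph

section

variable {X : Type*} [TopologicalSpace X]

variable (X) in
abbrev specializationGraph : SimpleGraph X :=
  underGraph fun x y : X => x ∈ closure ({y} : Set X)

lemma specializationGraph_adj_iff {x y : X} :
    (specializationGraph X).Adj x y ↔ x ≠ y ∧ (y ⤳ x ∨ x ⤳ y) := by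
  simp only [specializationGraph, underGraph, specializes_iff_mem_closure]

lemma Specializes.specializationGraph_reachable {x y : X} (h : x ⤳ y) :
    (specializationGraph X).Reachable x y := by
  rcases eq_or_ne x y with rfl | hne
  · rfl
  · exact (specializationGraph_adj_iff.2 ⟨hne, Or.inr h⟩).reachable

lemma Specializes.connectedComponent_eq {x y : X} (h : x ⤳ y) :
    connectedComponent x = connectedComponent y :=
  _root_.connectedComponent_eq (h.mem_closed isClosed_connectedComponent mem_connectedComponent)

lemma connectedComponent_eq_of_specializationGraph_reachable {x y : X}
    (h : (specializationGraph X).Reachable x y) :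
    connectedComponent x = connectedComponent y := by
  rw [reachable_iff_reflTransGen] at h
  induction h with
  | refl => rfl
  | tail _ hadj ih =>
    rw [ih]
    obtain ⟨_, hzy | hyz⟩ := specializationGraph_adj_iff.1 hadj
    · exact hzy.connectedComponent_eq.symm
    · exact hyz.connectedComponent_eq

lemma connectedSpace_of_specializationGraph_connected (h : (specializationGraph X).Connected) :
    ConnectedSpace X := by
  obtain ⟨x⟩ := h.nonempty
  refine connectedSpace_iff_connectedComponent.2 ⟨x, Set.eq_univ_of_forall fun y => ?_⟩
  rw [connectedComponent_eq_of_specializationGraph_reachable (h x y)]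
  exact mem_connectedComponent

lemma isClopen_of_forall_specializes_mem_iff [AlexandrovDiscrete X] {s : Set X}
    (hs : ∀ x y, x ⤳ y → (x ∈ s ↔ y ∈ s)) : IsClopen s :=
  ⟨isOpen_compl_iff.1 <| isOpen_iff_forall_specializes.2 fun x y hxy hy hx => hy ((hs x y hxy).1 hx),
    isOpen_iff_forall_specializes.2 fun x y hxy hy => (hs x y hxy).2 hy⟩

lemma isClopen_setOf_specializationGraph_reachable [AlexandrovDiscrete X] (x : X) :
    IsClopen {y | (specializationGraph X).Reachable x y} :=
  isClopen_of_forall_specializes_mem_iff fun _ _ h =>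
    ⟨fun hy => hy.trans h.specializationGraph_reachable,
      fun hz => hz.trans h.specializationGraph_reachable.symm⟩

lemma specializationGraph_connected_of_connectedSpace [AlexandrovDiscrete X] [ConnectedSpace X] :
    (specializationGraph X).Connected := by
  obtain ⟨x⟩ := ‹ConnectedSpace X›.toNonempty
  have hreach := (isClopen_setOf_specializationGraph_reachable x).eq_univ ⟨x, .refl x⟩
  exact (connected_iff_exists_forall_reachable _).2 ⟨x, Set.eq_univ_iff_forall.1 hreach⟩

end

/-- A finite topological space is connected iff its underlying graph
(distinct `x, y` adjacent iff `x ∈ closure {y}` or `y ∈ closure {x}`) is connected. -/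
theorem connectedSpace_iff_underGraph_connected
    {X : Type*} [Fintype X] [TopologicalSpace X] :
    ConnectedSpace X ↔
      (underGraph (fun x y : X => x ∈ closure ({y} : Set X))).Connected :=
  ⟨fun _ => specializationGraph_connected_of_connectedSpace,
    connectedSpace_of_specializationGraph_connected⟩
end

section
/- Let G be a triangle-free simple graph on a finite vertex type V (i.e., G has no 3-clique). Then there exists a preorder relation on V whose underlying graph equals G if and only if G is bipartite (2-colorable). -/
/-- A preorder relation: a reflexive and transitive relation. -/
def IsPreorderRel {V : Type*} (R : V → V → Prop) : Prop :=
  Reflexive R ∧ Transitive R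

/-- `tau G` is the number of preorder relations on `V` whose underlying graph equals `G`. -/
noncomputable def tau {V : Type*} (G : SimpleGraph V) : ℕ :=
  Nat.card {R : V → V → Prop // IsPreorderRel R ∧ underGraph R = G}

/-!
A 2-colouring gives a preorder directly: orient every edge away from its endpoint of colour `0`;
two consecutive edges would need a middle vertex of colour `0` adjacent to another one, so the
relation is transitive.

Conversely, let `R` be transitive with triangle-free underlying graph. Orient every edge along
`R`, breaking ties between equivalent vertices by an arbitrary linear order. Three pairwise
`R`-related vertices would form a triangle, so no vertex is both the head and the tail of an
oriented edge; colouring each vertex by whether it is a tail is then proper.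
-/

section Orientation

variable {V : Type*} {R : V → V → Prop}

lemma underGraph_adj_of_rel {x y : V} (hxy : x ≠ y) (h : R x y) : (underGraph R).Adj x y :=
  ⟨hxy, Or.inl h⟩

variable [LinearOrder V]

/-- The edges of `underGraph R`, oriented along `R`, and along `<` between equivalent vertices. -/
def orientedRel (R : V → V → Prop) (v w : V) : Prop :=
  v ≠ w ∧ R v w ∧ (R w v → v < w)

lemma orientedRel_or_orientedRel_of_adj {v w : V} (h : (underGraph R).Adj v w) :
    orientedRel R v w ∨ orientedRel R w v := by
  obtain ⟨hvw, hR⟩ := h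
  by_cases hvw' : R v w <;> by_cases hwv : R w v
  · rcases hvw.lt_or_gt with hlt | hlt
    · exact Or.inl ⟨hvw, hvw', fun _ => hlt⟩
    · exact Or.inr ⟨hvw.symm, hwv, fun _ => hlt⟩
  · exact Or.inl ⟨hvw, hvw', fun h => absurd h hwv⟩
  · exact Or.inr ⟨hvw.symm, hwv, fun h => absurd h hvw'⟩
  · tauto

lemma not_exists_orientedRel_of_orientedRel (hR : Transitive R)
    (hG : (underGraph R).CliqueFree 3) {v w : V} (hvw : orientedRel R v w) :
    ¬ ∃ u, orientedRel R w u := by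
  rintro ⟨u, hwu, hRwu, hlt⟩
  obtain ⟨hvw, hRvw, hlt'⟩ := hvw
  have hvu : v ≠ u := by
    rintro rfl
    exact (hlt hRvw).not_gt (hlt' hRwu)
  exact SimpleGraph.isIndepSet_neighborSet_of_triangleFree _ hG v (underGraph_adj_of_rel hvw hRvw)
    (underGraph_adj_of_rel hvu (hR hRvw hRwu)) hwu (underGraph_adj_of_rel hwu hRwu)

end Orientation

lemma Transitive.underGraph_colorable_two {V : Type*} {R : V → V → Prop} (hR : Transitive R)
    (hG : (underGraph R).CliqueFree 3) : (underGraph R).Colorable 2 := by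
  let : LinearOrder V := IsWellOrder.linearOrder WellOrderingRel
  have isTail_ne {v w : V} (h : orientedRel R v w) :
      (∃ u, orientedRel R v u) ≠ (∃ u, orientedRel R w u) := fun heq =>
    not_exists_orientedRel_of_orientedRel hR hG h (heq ▸ ⟨w, h⟩)
  let C : (underGraph R).Coloring Prop :=
    SimpleGraph.Coloring.mk (fun v => ∃ w, orientedRel R v w) fun hadj =>
      (orientedRel_or_orientedRel_of_adj hadj).elim isTail_ne fun h => (isTail_ne h).symm
  exact Fintype.card_prop ▸ C.colorable

namespace SimpleGraph.Coloring

variable {V : Type*} {G : SimpleGraph V}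

def edgeRel (C : G.Coloring (Fin 2)) (x y : V) : Prop :=
  x = y ∨ (G.Adj x y ∧ C x = 0)

lemma isPreorderRel_edgeRel (C : G.Coloring (Fin 2)) : IsPreorderRel C.edgeRel := by
  refine ⟨fun x => Or.inl rfl, ?_⟩
  rintro x y z (rfl | ⟨hxy, hx⟩) (rfl | ⟨hyz, hy⟩)
  · exact Or.inl rfl
  · exact Or.inr ⟨hyz, hy⟩
  · exact Or.inr ⟨hxy, hx⟩
  · exact absurd (hx.trans hy.symm) (C.valid hxy)

lemma underGraph_edgeRel (C : G.Coloring (Fin 2)) : underGraph C.edgeRel = G := by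
  ext x y
  constructor
  · rintro ⟨hxy, (rfl | ⟨h, -⟩) | (rfl | ⟨h, -⟩)⟩
    · exact absurd rfl hxy
    · exact h
    · exact absurd rfl hxy
    · exact h.symm
  · intro h
    have hC : C x = 0 ∨ C y = 0 := by
      have := C.valid h
      omega
    rcases hC with hC | hC
    · exact ⟨h.ne, Or.inl (Or.inr ⟨h, hC⟩)⟩
    · exact ⟨h.ne, Or.inr (Or.inr ⟨h.symm, hC⟩)⟩

end SimpleGraph.Coloring

theorem triangleFree_underlying_iff_bipartite_general
    {V : Type*} (G : SimpleGraph V) (hG : G.CliqueFree 3) :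
    (∃ R : V → V → Prop, IsPreorderRel R ∧ underGraph R = G) ↔ G.Colorable 2 := by
  constructor
  · rintro ⟨R, ⟨-, hR⟩, rfl⟩
    exact hR.underGraph_colorable_two hG
  · rintro ⟨C⟩
    exact ⟨C.edgeRel, C.isPreorderRel_edgeRel, C.underGraph_edgeRel⟩

/-- A triangle-free graph is the underlying graph of some preorder relation iff it is
bipartite. -/
theorem triangleFree_underlying_iff_bipartite
    {V : Type*} [Fintype V] (G : SimpleGraph V) (hG : G.CliqueFree 3) :
    (∃ R : V → V → Prop, IsPreorderRel R ∧ underGraph R = G) ↔ G.Colorable 2 :=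
  triangleFree_underlying_iff_bipartite_general G hG
end

section
/- Let G be a connected bipartite (2-colorable) simple graph on a finite vertex type V with at least 3 vertices. Then τ(G) = 2, i.e., there are exactly two preorder relations on V whose underlying graph equals G. -/
/-!
In a triangle-free graph `G`, a preorder `R` with underlying graph `G` cannot relate `x → y → z`
along a path whose ends are not adjacent, since transitivity would add the edge `xz`. Hence every
vertex relates either to all of its neighbours or to none of them. A two-way edge `x ⇄ y` would
make `x` and `y` interchangeable for `R`, so any third neighbour of either one would close a
triangle; in a connected graph with at least three vertices this is impossible. So `R` orients each
edge away from exactly one endpoint, and the vertices that relate to their neighbours form one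
colour class of a proper 2-colouring. This identifies the preorders with underlying graph `G` with
the 2-colourings of `G`, and a connected bipartite graph has exactly two of those.
-/

namespace SimpleGraph

variable {V : Type*} {G : SimpleGraph V}

theorem Preconnected.eq_of_forall_adj {β : Type*} (hG : G.Preconnected) {f : V → β}
    (hf : ∀ x y, G.Adj x y → f x = f y) (x y : V) : f x = f y := by
  obtain ⟨p⟩ := hG x y
  induction p with
  | nil => rfl
  | cons h _ ih => exact (hf _ _ h).trans ih

theorem Connected.coloring_eq_or_eq_not (hG : G.Connected) (c d : G.Coloring Bool) :
    ⇑d = ⇑c ∨ ⇑d = (! ·) ∘ ⇑c := by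
  have hflip (e : G.Coloring Bool) {x y : V} (h : G.Adj x y) : e y = !e x :=
    Bool.eq_not.2 (e.valid h).symm
  obtain ⟨v⟩ := hG.nonempty
  have hconst := hG.preconnected.eq_of_forall_adj (f := fun x => xor (c x) (d x))
    (fun x y h => by simp only [hflip c h, hflip d h, Bool.not_xor_not]) v
  have hd (x : V) : d x = xor (c x) (xor (c v) (d v)) := by
    simp only [hconst x, Bool.bne_self_left]
  cases hv : xor (c v) (d v)
  · exact .inl (funext fun x => by simp [hd x, hv])
  · exact .inr (funext fun x => by simp [hd x, hv])

theorem Connected.card_coloring_bool (hG : G.Connected) (hb : G.Colorable 2) :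
    Nat.card (G.Coloring Bool) = 2 := by
  obtain ⟨c⟩ : Nonempty (G.Coloring Bool) := ⟨G.recolorOfEquiv finTwoEquiv hb.some⟩
  obtain ⟨v⟩ := hG.nonempty
  refine Nat.card_eq_two_iff.2 ⟨c, G.recolorOfEquiv Equiv.boolNot c, fun h => ?_, ?_⟩
  · have := DFunLike.congr_fun h v
    simp at this
  · ext d
    simp only [Set.mem_insert_iff, Set.mem_singleton_iff, Set.mem_univ, iff_true]
    rcases hG.coloring_eq_or_eq_not c d with h | h
    · exact .inl (DFunLike.coe_injective h)
    · exact .inr (DFunLike.coe_injective h)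

def Coloring.sourceRel (c : G.Coloring Bool) : V → V → Prop :=
  fun x y => x = y ∨ (G.Adj x y ∧ c x = true)

theorem Coloring.isPreorderRel_sourceRel (c : G.Coloring Bool) : IsPreorderRel c.sourceRel := by
  refine ⟨fun x => .inl rfl, ?_⟩
  rintro x y z (rfl | ⟨hxy, hx⟩) (rfl | ⟨hyz, hy⟩)
  · exact .inl rfl
  · exact .inr ⟨hyz, hy⟩
  · exact .inr ⟨hxy, hx⟩
  · exact absurd (hx.trans hy.symm) (c.valid hxy)

theorem Coloring.underGraph_sourceRel (c : G.Coloring Bool) : underGraph c.sourceRel = G := by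
  ext x y
  refine ⟨?_, fun h => ⟨h.ne, ?_⟩⟩
  · rintro ⟨hne, (rfl | ⟨h, -⟩) | (rfl | ⟨h, -⟩)⟩
    exacts [absurd rfl hne, h, absurd rfl hne, h.symm]
  · cases hx : c x
    · exact .inr (.inr ⟨h.symm, by simpa [hx] using (c.valid h).symm⟩)
    · exact .inl (.inr ⟨h, hx⟩)

theorem Coloring.sourceRel_injective (hG : ∀ x, ∃ y, G.Adj x y) :
    Function.Injective (Coloring.sourceRel : G.Coloring Bool → V → V → Prop) := by
  intro c d h
  ext x
  obtain ⟨y, hxy⟩ := hG x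
  have := congr_fun₂ h x y
  simpa [Coloring.sourceRel, hxy.ne, hxy] using this

end SimpleGraph

open SimpleGraph

namespace IsPreorderRel

variable {V : Type*} {R : V → V → Prop}

theorem rel_of_adj_of_rel (hR : IsPreorderRel R) (hT : (underGraph R).CliqueFree 3) {w u v : V}
    (hwu : (underGraph R).Adj w u) (hwv : (underGraph R).Adj w v) (h : R w u) : R w v := by
  by_cases huv : u = v
  · exact huv ▸ h
  by_contra hn
  have hvu : (underGraph R).Adj v u := ⟨Ne.symm huv, .inl (hR.2 (hwv.2.resolve_left hn) h)⟩
  exact isIndepSet_neighborSet_of_triangleFree _ hT w hwu hwv huv hvu.symm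

theorem eq_of_rel_of_rel_of_adj (hR : IsPreorderRel R) (hT : (underGraph R).CliqueFree 3)
    {x y z : V} (hxy : x ≠ y) (hRxy : R x y) (hRyx : R y x) (hyz : (underGraph R).Adj y z) :
    z = x := by
  by_contra hzx
  have hyx : (underGraph R).Adj y x := ⟨Ne.symm hxy, .inl hRyx⟩
  have hxz : (underGraph R).Adj x z :=
    ⟨Ne.symm hzx, .inl (hR.2 hRxy (hR.rel_of_adj_of_rel hT hyx hyz hRyx))⟩
  exact isIndepSet_neighborSet_of_triangleFree _ hT y hyx hyz (Ne.symm hzx) hxz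

theorem eq_or_eq_of_rel_of_rel (hR : IsPreorderRel R) (hT : (underGraph R).CliqueFree 3)
    (hc : (underGraph R).Preconnected) {x y : V} (hxy : x ≠ y) (hRxy : R x y) (hRyx : R y x)
    (z : V) : z = x ∨ z = y := by
  have hclosed {u w : V} (huw : (underGraph R).Adj u w) : u = x ∨ u = y → w = x ∨ w = y := by
    rintro (rfl | rfl)
    · exact .inr (hR.eq_of_rel_of_rel_of_adj hT (Ne.symm hxy) hRyx hRxy huw)
    · exact .inl (hR.eq_of_rel_of_rel_of_adj hT hxy hRxy hRyx huw)
  have := hc.eq_of_forall_adj (f := fun u => u = x ∨ u = y)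
    (fun u w huw => propext ⟨hclosed huw, hclosed huw.symm⟩) x z
  exact this ▸ .inl rfl

theorem not_rel_of_rel (hR : IsPreorderRel R) (hT : (underGraph R).CliqueFree 3)
    (hc : (underGraph R).Preconnected) (h3 : 3 ≤ Nat.card V) {x y : V} (hxy : x ≠ y)
    (hRxy : R x y) : ¬R y x := by
  intro hRyx
  have hsurj : Function.Surjective (fun b : Bool => cond b x y) := fun z => by
    rcases hR.eq_or_eq_of_rel_of_rel hT hc hxy hRxy hRyx z with rfl | rfl
    exacts [⟨true, rfl⟩, ⟨false, rfl⟩]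
  have := Nat.card_le_card_of_surjective _ hsurj
  rw [Nat.card_eq_fintype_card (α := Bool), Fintype.card_bool] at this
  omega

theorem exists_coloring_sourceRel_eq (hR : IsPreorderRel R) (hT : (underGraph R).CliqueFree 3)
    (hc : (underGraph R).Preconnected) (h3 : 3 ≤ Nat.card V) :
    ∃ c : (underGraph R).Coloring Bool, c.sourceRel = R := by
  classical
  have hsrc {x y : V} (hxy : (underGraph R).Adj x y) :
      (∀ w, (underGraph R).Adj x w → R x w) ↔ R x y :=
    ⟨fun h => h y hxy, fun h _ hxw => hR.rel_of_adj_of_rel hT hxy hxw h⟩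
  refine ⟨Coloring.mk (fun x => decide (∀ w, (underGraph R).Adj x w → R x w))
    fun {x y} hxy => ?_, ?_⟩
  · rw [ne_eq, decide_eq_decide, hsrc hxy, hsrc hxy.symm]
    rcases hxy.2 with h | h
    · exact fun hiff => hR.not_rel_of_rel hT hc h3 hxy.1 h (hiff.1 h)
    · exact fun hiff => hR.not_rel_of_rel hT hc h3 hxy.1.symm h (hiff.2 h)
  · funext x y
    simp only [Coloring.sourceRel, Coloring.mk, RelHom.coeFn_mk, decide_eq_true_eq, eq_iff_iff]
    refine ⟨?_, fun h => ?_⟩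
    · rintro (rfl | ⟨hxy, h⟩)
      exacts [hR.1 x, h y hxy]
    · by_cases hxy : x = y
      · exact .inl hxy
      · exact .inr ⟨⟨hxy, .inl h⟩, (hsrc ⟨hxy, .inl h⟩).2 h⟩

end IsPreorderRel

theorem tau_eq_card_coloring_bool {V : Type*} {G : SimpleGraph V} (hc : G.Connected)
    (hT : G.CliqueFree 3) (h3 : 3 ≤ Nat.card V) : tau G = Nat.card (G.Coloring Bool) := by
  have : Finite V := Nat.finite_of_card_ne_zero (by omega)
  have : Nontrivial V := Finite.one_lt_card_iff_nontrivial.1 (by omega)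
  refine (Nat.card_congr (Equiv.ofBijective (fun c => ⟨c.sourceRel, c.isPreorderRel_sourceRel,
    c.underGraph_sourceRel⟩) ⟨fun c d h => ?_, ?_⟩)).symm
  · exact Coloring.sourceRel_injective hc.preconnected.exists_adj_of_nontrivial
      (congrArg Subtype.val h)
  · rintro ⟨R, hR, rfl⟩
    obtain ⟨c, hcR⟩ := hR.exists_coloring_sourceRel_eq hT hc.preconnected h3
    exact ⟨c, Subtype.ext hcR⟩

/-- A connected bipartite graph on at least 3 vertices has exactly 2 preorder relations
with that underlying graph. -/
theorem tau_of_connected_bipartite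
    {V : Type*} [Fintype V] (G : SimpleGraph V) (hc : G.Connected)
    (hb : G.Colorable 2) (h3 : 3 ≤ Fintype.card V) :
    tau G = 2 := by
  rw [tau_eq_card_coloring_bool hc (hb.cliqueFree (by norm_num))
    (Nat.card_eq_fintype_card (α := V) ▸ h3), hc.card_coloring_bool hb]
end

section
/- Let G be a connected bipartite simple graph on a finite vertex type V with at least 3 vertices, and let X₁, X₂ be the two color classes of a proper 2-coloring of G (so every edge of G joins X₁ to X₂). Then ℏ(G) = 1 if there exists a graph automorphism σ of G with σ(X₁) = X₂, and ℏ(G) = 2 otherwise. -/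
/-- Isomorphism of preorder relations with the same underlying graph, as a setoid. -/
def preSetoid {V : Type*} (G : SimpleGraph V) :
    Setoid {R : V → V → Prop // IsPreorderRel R ∧ underGraph R = G} where
  r R R' := ∃ σ : V ≃ V, ∀ x y, R.1 x y ↔ R'.1 (σ x) (σ y)
  iseqv := by
    constructor
    · intro R; exact ⟨Equiv.refl V, fun x y => Iff.rfl⟩
    · rintro R R' ⟨σ, h⟩
      exact ⟨σ.symm, fun x y => by
        simpa using (h (σ.symm x) (σ.symm y)).symm⟩
    · rintro R R' R'' ⟨σ, h⟩ ⟨σ', h'⟩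
      exact ⟨σ.trans σ', fun x y => (h x y).trans (h' (σ x) (σ y))⟩

/-- `hbar G` is the number of isomorphism classes of preorder relations on `V`
whose underlying graph equals `G`. -/
noncomputable def hbar {V : Type*} (G : SimpleGraph V) : ℕ :=
  Nat.card (Quotient (preSetoid G))

/-!
A bipartite graph is triangle-free, and in a connected graph on at least three vertices every edge
meets a third vertex. Hence a preorder with underlying graph `G` is antisymmetric and has no
chain `x < y < z`: every vertex is a source or a sink, and being a source alternates along edges.
By connectedness the sources form one color class of `C`, so there are exactly two such preorders,
`C.orientFrom 0` and `C.orientFrom 1`. A relabelling carrying one to the other preserves adjacency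
and sources, i.e. it is an automorphism of `G` exchanging the color classes.
-/

namespace SimpleGraph

variable {V : Type*} {G : SimpleGraph V}

theorem Preconnected.iff_of_forall_adj (hG : G.Preconnected) {P : V → Prop}
    (hP : ∀ u v, G.Adj u v → (P u ↔ P v)) (u v : V) : P u ↔ P v := by
  obtain ⟨p⟩ := hG u v
  induction p with
  | nil => rfl
  | cons h _ ih => exact (hP _ _ h).trans ih

theorem Preconnected.exists_adj_ne_ne (hG : G.Preconnected) {x y z : V} (hzx : z ≠ x)
    (hzy : z ≠ y) : ∃ w, w ≠ x ∧ w ≠ y ∧ (G.Adj x w ∨ G.Adj y w) := by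
  by_contra! hout
  have hpair : ∀ u v, G.Adj u v → (u = x ∨ u = y ↔ v = x ∨ v = y) := by
    intro u v huv
    constructor
    · rintro (rfl | rfl) <;> by_contra! hv
      exacts [(hout v hv.1 hv.2).1 huv, (hout v hv.1 hv.2).2 huv]
    · rintro (rfl | rfl) <;> by_contra! hu
      exacts [(hout u hu.1 hu.2).1 huv.symm, (hout u hu.1 hu.2).2 huv.symm]
  rcases (hG.iff_of_forall_adj hpair x z).1 (Or.inl rfl) with h | h
  exacts [hzx h, hzy h]

theorem Preconnected.exists_forall_iff_coloring_eq [Nonempty V] (hG : G.Preconnected)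
    (C : G.Coloring (Fin 2)) {P : V → Prop} (hP : ∀ u v, G.Adj u v → (P u ↔ ¬ P v)) :
    ∃ i, ∀ v, P v ↔ C v = i := by
  have hC : ∀ u v, G.Adj u v → ∀ i, (C u = i ↔ C v ≠ i) := by
    intro u v huv i
    have := C.valid huv
    omega
  obtain ⟨x⟩ := ‹Nonempty V›
  obtain ⟨i, hi⟩ : ∃ i, P x ↔ C x = i := by
    by_cases hx : P x
    exacts [⟨C x, by simpa⟩, ⟨C x + 1, by simpa using hx⟩]
  refine ⟨i, fun v => (hG.iff_of_forall_adj (P := fun v => P v ↔ C v = i) ?_ x v).1 hi⟩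
  intro u v huv
  rw [hP u v huv, hC u v huv i]
  exact not_iff_not

def Coloring.orientFrom (C : G.Coloring (Fin 2)) (i : Fin 2) : V → V → Prop :=
  fun x y => x = y ∨ (G.Adj x y ∧ C x = i)

variable (C : G.Coloring (Fin 2)) (i : Fin 2)

theorem Coloring.isPreorderRel_orientFrom : IsPreorderRel (C.orientFrom i) := by
  refine ⟨fun x => Or.inl rfl, ?_⟩
  rintro x y z (rfl | ⟨hxy, hx⟩) (rfl | ⟨hyz, hy⟩)
  · exact Or.inl rfl
  · exact Or.inr ⟨hyz, hy⟩
  · exact Or.inr ⟨hxy, hx⟩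
  · exact absurd (hx.trans hy.symm) (C.valid hxy)

theorem Coloring.underGraph_orientFrom : underGraph (C.orientFrom i) = G := by
  ext x y
  simp only [underGraph, orientFrom]
  constructor
  · rintro ⟨hne, (rfl | ⟨h, -⟩) | (rfl | ⟨h, -⟩)⟩
    exacts [absurd rfl hne, h, absurd rfl hne, h.symm]
  · intro h
    refine ⟨h.ne, ?_⟩
    rcases (by have := C.valid h; omega : C x = i ∨ C y = i) with hx | hy
    exacts [.inl (.inr ⟨h, hx⟩), .inr (.inr ⟨h.symm, hy⟩)]

end SimpleGraph

open SimpleGraph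

section Preorder

variable {V W : Type*} {R : V → V → Prop}

def IsSource (R : V → V → Prop) (v : V) : Prop :=
  ∃ w, v ≠ w ∧ R v w

theorem underGraph_adj_map_iff {R' : W → W → Prop} (σ : V ≃ W)
    (h : ∀ x y, R x y ↔ R' (σ x) (σ y)) (x y : V) :
    (underGraph R').Adj (σ x) (σ y) ↔ (underGraph R).Adj x y := by
  simp only [underGraph, h, σ.injective.ne_iff]

theorem isSource_map_iff {R' : W → W → Prop} (σ : V ≃ W)
    (h : ∀ x y, R x y ↔ R' (σ x) (σ y)) (x : V) : IsSource R' (σ x) ↔ IsSource R x := by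
  simp only [IsSource, h, σ.surjective.exists, σ.injective.ne_iff]

theorem SimpleGraph.Coloring.isSource_orientFrom_iff {G : SimpleGraph V}
    (C : G.Coloring (Fin 2)) (i : Fin 2) {v : V} (hv : ∃ w, G.Adj v w) :
    IsSource (C.orientFrom i) v ↔ C v = i := by
  constructor
  · rintro ⟨w, hvw, rfl | ⟨-, hi⟩⟩
    exacts [absurd rfl hvw, hi]
  · obtain ⟨w, hw⟩ := hv
    exact fun hi => ⟨w, hw.ne, Or.inr ⟨hw, hi⟩⟩

namespace IsPreorderRel

variable (hR : IsPreorderRel R) (hT : (underGraph R).CliqueFree 3)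
include hR hT

theorem not_rel_of_rel_of_adj {x y z : V} (hxy : x ≠ y) (hzy : z ≠ y)
    (hxz : (underGraph R).Adj x z) (h : R x y) : ¬ R y x := by
  classical
  intro h'
  refine hT {x, y, z} (is3Clique_triple_iff.2 ⟨⟨hxy, .inl h⟩, hxz, ⟨hzy.symm, ?_⟩⟩)
  rcases hxz.2 with hxz | hzx
  exacts [.inl (hR.2 h' hxz), .inr (hR.2 hzx h)]

theorem not_rel_of_rel_s5
    (hnbr : ∀ x y, ∃ z, z ≠ x ∧ z ≠ y ∧ ((underGraph R).Adj x z ∨ (underGraph R).Adj y z))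
    {x y z : V} (hxy : x ≠ y) (hyz : y ≠ z) (h : R x y) : ¬ R y z := by
  classical
  intro h'
  by_cases hxz : x = z
  · subst hxz
    obtain ⟨w, hwx, hwy, hxw | hyw⟩ := hnbr x y
    exacts [hR.not_rel_of_rel_of_adj hT hxy hwy hxw h h',
      hR.not_rel_of_rel_of_adj hT hyz hwx hyw h' h]
  · exact hT {x, y, z} (is3Clique_triple_iff.2
      ⟨⟨hxy, .inl h⟩, ⟨hxz, .inl (hR.2 h h')⟩, ⟨hyz, .inl h'⟩⟩)

theorem isSource_iff_not_isSource
    (hnbr : ∀ x y, ∃ z, z ≠ x ∧ z ≠ y ∧ ((underGraph R).Adj x z ∨ (underGraph R).Adj y z))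
    {u v : V} (huv : (underGraph R).Adj u v) : IsSource R u ↔ ¬ IsSource R v := by
  have key : ∀ {x y}, x ≠ y → R x y → IsSource R x ∧ ¬ IsSource R y :=
    fun hxy h => ⟨⟨_, hxy, h⟩, fun ⟨_, hyz, h'⟩ => hR.not_rel_of_rel_s5 hT hnbr hxy hyz h h'⟩
  rcases huv.2 with h | h
  · exact iff_of_true (key huv.1 h).1 (key huv.1 h).2
  · exact iff_of_false (key huv.1.symm h).2 (not_not.2 (key huv.1.symm h).1)

end IsPreorderRel

theorem eq_orientFrom_of_isSource_iff {G : SimpleGraph V} (C : G.Coloring (Fin 2)) {i : Fin 2}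
    (hrefl : ∀ x, R x x) (hG : underGraph R = G) (hi : ∀ v, IsSource R v ↔ C v = i) :
    R = C.orientFrom i := by
  subst hG
  ext x y
  constructor
  · intro h
    by_cases hxy : x = y
    · exact .inl hxy
    · exact .inr ⟨⟨hxy, .inl h⟩, (hi x).1 ⟨y, hxy, h⟩⟩
  · rintro (rfl | ⟨hxy, hx⟩)
    · exact hrefl x
    · refine hxy.2.resolve_right fun h => C.valid hxy ?_
      rw [hx]
      exact ((hi y).1 ⟨x, hxy.1.symm, h⟩).symm

theorem IsPreorderRel.exists_eq_orientFrom {G : SimpleGraph V} (hR : IsPreorderRel R)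
    (hG : underGraph R = G) (hc : G.Preconnected) (h3 : 3 ≤ ENat.card V)
    (C : G.Coloring (Fin 2)) : ∃ i, R = C.orientFrom i := by
  subst hG
  have hT : (underGraph R).CliqueFree 3 := C.colorable.cliqueFree (by norm_num)
  have hnbr : ∀ x y, ∃ z, z ≠ x ∧ z ≠ y ∧ ((underGraph R).Adj x z ∨ (underGraph R).Adj y z) :=
    fun x y =>
      have ⟨_, hzx, hzy⟩ := ENat.exists_ne_ne_of_three_le h3 x y
      hc.exists_adj_ne_ne hzx hzy
  have : Nonempty V := (ENat.one_le_card_iff_nonempty V).1 (le_trans (by norm_num) h3)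
  obtain ⟨i, hi⟩ := hc.exists_forall_iff_coloring_eq C
    fun _ _ huv => hR.isSource_iff_not_isSource hT hnbr huv
  exact ⟨i, eq_orientFrom_of_isSource_iff C hR.1 rfl hi⟩

theorem SimpleGraph.Coloring.exists_equiv_orientFrom_iff {G : SimpleGraph V}
    (C : G.Coloring (Fin 2)) (hnbr : ∀ v, ∃ w, G.Adj v w) :
    (∃ σ : V ≃ V, ∀ x y, C.orientFrom 0 x y ↔ C.orientFrom 1 (σ x) (σ y)) ↔
      ∃ σ : G ≃g G, ⇑σ '' {v | C v = 0} = {v | C v = 1} := by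
  constructor
  · rintro ⟨σ, hσ⟩
    have hadj : ∀ x y, G.Adj (σ x) (σ y) ↔ G.Adj x y := by
      simpa only [C.underGraph_orientFrom] using underGraph_adj_map_iff σ hσ
    refine ⟨⟨σ, hadj _ _⟩, (Set.eq_preimage_iff_image_eq σ.bijective).1 ?_⟩
    ext x
    show C x = 0 ↔ C (σ x) = 1
    simpa only [C.isSource_orientFrom_iff _ (hnbr _)] using (isSource_map_iff σ hσ x).symm
  · rintro ⟨σ, hσ⟩
    have hcol : ∀ x, C (σ x) = 1 ↔ C x = 0 := fun x =>
      (Set.ext_iff.1 hσ (σ x)).symm.trans σ.injective.mem_set_image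
    refine ⟨σ.toEquiv, fun x y => ?_⟩
    simp only [orientFrom, RelIso.coe_fn_toEquiv, σ.injective.eq_iff, σ.map_adj_iff, hcol]

end Preorder

namespace Setoid

variable {α : Type*} (s : Setoid α) {a b : α}

theorem card_quotient_eq_one_of_rel (hab : ∀ x, x = a ∨ x = b) (h : s a b) :
    Nat.card (Quotient s) = 1 := by
  refine Nat.card_eq_one_iff_unique.2 ⟨⟨Quotient.ind₂ fun x y => Quotient.sound ?_⟩, ⟨⟦a⟧⟩⟩
  rcases hab x with rfl | rfl <;> rcases hab y with rfl | rfl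
  exacts [s.refl _, h, s.symm h, s.refl _]

theorem card_quotient_eq_two_of_not_rel (hab : ∀ x, x = a ∨ x = b) (h : ¬ s a b) :
    Nat.card (Quotient s) = 2 := by
  refine Nat.card_eq_two_iff.2 ⟨⟦a⟧, ⟦b⟧, fun e => h (Quotient.exact e), ?_⟩
  refine Set.eq_univ_of_forall (Quotient.ind fun x => ?_)
  rcases hab x with rfl | rfl <;> simp

end Setoid

/-- For a connected bipartite graph on at least 3 vertices with color classes `X₁, X₂`,
`ℏ(G) = 1` if some automorphism maps `X₁` onto `X₂`, and `ℏ(G) = 2` otherwise. -/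
theorem hbar_of_connected_bipartite
    {V : Type*} [Fintype V] (G : SimpleGraph V) (hc : G.Connected)
    (h3 : 3 ≤ Fintype.card V) (C : G.Coloring (Fin 2)) :
    ((∃ σ : G ≃g G, ⇑σ '' {v | C v = 0} = {v | C v = 1}) → hbar G = 1) ∧
    ((¬ ∃ σ : G ≃g G, ⇑σ '' {v | C v = 0} = {v | C v = 1}) → hbar G = 2) := by
  have h3' : 3 ≤ ENat.card V := by simpa [ENat.card_eq_coe_fintype_card] using h3
  have : Nontrivial V := (ENat.one_lt_card_iff_nontrivial V).1 (lt_of_lt_of_le (by norm_num) h3')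
  let R (i : Fin 2) : {R : V → V → Prop // IsPreorderRel R ∧ underGraph R = G} :=
    ⟨C.orientFrom i, C.isPreorderRel_orientFrom i, C.underGraph_orientFrom i⟩
  have hcover : ∀ R', R' = R 0 ∨ R' = R 1 := by
    rintro ⟨R', hR', hG⟩
    obtain ⟨i, rfl⟩ := hR'.exists_eq_orientFrom hG hc.preconnected h3' C
    fin_cases i
    exacts [.inl rfl, .inr rfl]
  have hiff := C.exists_equiv_orientFrom_iff hc.preconnected.exists_adj_of_nontrivial
  exact ⟨fun h => (preSetoid G).card_quotient_eq_one_of_rel hcover (hiff.2 h),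
    fun h => (preSetoid G).card_quotient_eq_two_of_not_rel hcover (mt hiff.1 h)⟩
end

section
/- Let G be a connected simple graph on a finite vertex type V and H a connected simple graph on a finite vertex type W, and assume G and H are not isomorphic as simple graphs. Then ℏ(G ⊕ H) = ℏ(G) · ℏ(H), where G ⊕ H is the disjoint union on V ⊕ W. -/
/-! A preorder on `V ⊕ W` whose graph is `G ⊕g H` relates no vertex of `V` to one of `W`, so
it is the sum of its restrictions, preorders with graphs `G` and `H`. An isomorphism between two
such preorders is an automorphism of `G ⊕g H`. As `G` and `H` are connected, it maps each summand
into a single summand; being onto, it cannot send both into the same one, and it cannot swap them,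
as it would then restrict to an isomorphism `G ≃g H`. So it is a sum of bijections of `V` and of
`W`, and isomorphism classes on `V ⊕ W` correspond to pairs of isomorphism classes on `V`, `W`. -/

open Function Sum

namespace Equiv

variable {α β γ δ : Type*}

theorem exists_eq_sumCongr_of_isLeft (σ : α ⊕ β ≃ γ ⊕ δ)
    (h : ∀ a, (σ a).isLeft = a.isLeft) :
    ∃ (e₁ : α ≃ γ) (e₂ : β ≃ δ), σ = e₁.sumCongr e₂ := by
  have hl : ∀ a, a.isLeft ↔ (σ a).isLeft := by simp [h]
  have hr : ∀ a, a.isRight ↔ (σ a).isRight := by simp only [← bnot_isLeft, h, implies_true]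
  refine ⟨sumIsLeft.symm.trans ((σ.subtypeEquiv hl).trans sumIsLeft),
    sumIsRight.symm.trans ((σ.subtypeEquiv hr).trans sumIsRight), ?_⟩
  ext (a | b) <;> simp

end Equiv

namespace SimpleGraph

variable {V W V' W' : Type*} {G : SimpleGraph V} {H : SimpleGraph W}
  {G' : SimpleGraph V'} {H' : SimpleGraph W'}

theorem Reachable.isLeft_eq_of_sum {a b : V ⊕ W} (h : (G ⊕g H).Reachable a b) :
    a.isLeft = b.isLeft := by
  rcases a with x | y <;> rcases b with x' | y'
  · rfl
  · exact absurd h (not_reachable_sum_inl_inr x y')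
  · exact absurd h.symm (not_reachable_sum_inl_inr x' y)
  · rfl

theorem Iso.exists_eq_sumCongr_of_isLeft (σ : G ⊕g H ≃g G' ⊕g H')
    (h : ∀ a, (σ a).isLeft = a.isLeft) :
    ∃ (τ₁ : G ≃g G') (τ₂ : H ≃g H'), σ = τ₁.sumCongr τ₂ := by
  obtain ⟨e₁, e₂, he⟩ := σ.toEquiv.exists_eq_sumCongr_of_isLeft h
  have hσ (a : V ⊕ W) : σ a = Sum.map e₁ e₂ a := DFunLike.congr_fun he a
  refine ⟨⟨e₁, fun {x y} => ?_⟩, ⟨e₂, fun {x y} => ?_⟩, RelIso.ext fun a => hσ a⟩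
  · simpa [hσ] using σ.map_rel_iff (a := inl x) (b := inl y)
  · simpa [hσ] using σ.map_rel_iff (a := inr x) (b := inr y)

theorem Iso.exists_eq_sumCongr_of_not_iso (hG : G.Connected) (hH : H.Connected)
    (hni : ¬ Nonempty (G ≃g H)) (σ : G ⊕g H ≃g G ⊕g H) :
    ∃ (τ₁ : G ≃g G) (τ₂ : H ≃g H), σ = τ₁.sumCongr τ₂ := by
  obtain ⟨x₀⟩ := hG.nonempty
  obtain ⟨y₀⟩ := hH.nonempty
  have side_inl (x : V) : (σ (inl x)).isLeft = (σ (inl x₀)).isLeft :=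
    (((hG.preconnected x x₀).map Embedding.sumInl.toHom).map σ.toHom).isLeft_eq_of_sum
  have side_inr (y : W) : (σ (inr y)).isLeft = (σ (inr y₀)).isLeft :=
    (((hH.preconnected y y₀).map Embedding.sumInr.toHom).map σ.toHom).isLeft_eq_of_sum
  have one_side (hσ : (σ (inl x₀)).isLeft = (σ (inr y₀)).isLeft) : False := by
    obtain ⟨a, ha⟩ := σ.surjective (inl x₀)
    obtain ⟨b, hb⟩ := σ.surjective (inr y₀)
    have hab : (σ a).isLeft = (σ b).isLeft := by
      rcases a with x | y <;> rcases b with x' | y' <;> simp only [side_inl, side_inr, hσ]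
    simp [ha, hb] at hab
  cases h₁ : (σ (inl x₀)).isLeft <;> cases h₂ : (σ (inr y₀)).isLeft
  · exact (one_side (h₁.trans h₂.symm)).elim
  · refine (hni ?_).elim
    obtain ⟨τ, _⟩ := Iso.exists_eq_sumCongr_of_isLeft (σ.trans Iso.sumComm)
      (by rintro (x | y)
          · simpa [h₁] using side_inl x
          · simpa [h₂] using side_inr y)
    exact ⟨τ⟩
  · exact σ.exists_eq_sumCongr_of_isLeft
      (by rintro (x | y) <;> simp [side_inl, side_inr, h₁, h₂])
  · exact (one_side (h₁.trans h₂.symm)).elim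

end SimpleGraph

abbrev GraphPreorder {V : Type*} (G : SimpleGraph V) :=
  {R : V → V → Prop // IsPreorderRel R ∧ underGraph R = G}

section Preorder

variable {V W V' : Type*}

theorem IsPreorderRel.onFun {R : V' → V' → Prop} (hR : IsPreorderRel R) (f : V → V') :
    IsPreorderRel (R on f) :=
  ⟨fun x => hR.1 (f x), fun _ _ _ h₁ h₂ => hR.2 h₁ h₂⟩

theorem IsPreorderRel.liftRel {P : V → V → Prop} {Q : W → W → Prop} (hP : IsPreorderRel P)
    (hQ : IsPreorderRel Q) : IsPreorderRel (LiftRel P Q) := by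
  refine ⟨?_, ?_⟩
  · rintro (x | y)
    exacts [.inl (hP.1 x), .inr (hQ.1 y)]
  · rintro _ _ _ (h₁ | h₁) h₂ <;> cases h₂
    exacts [.inl (hP.2 h₁ ‹_›), .inr (hQ.2 h₁ ‹_›)]

theorem underGraph_onFun {R : V' → V' → Prop} {f : V → V'} (hf : Injective f) :
    underGraph (R on f) = (underGraph R).comap f := by
  ext x y
  simp [underGraph, hf.ne_iff]

theorem underGraph_liftRel (P : V → V → Prop) (Q : W → W → Prop) :
    underGraph (LiftRel P Q) = underGraph P ⊕g underGraph Q := by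
  ext (x | y) (x' | y') <;> simp [underGraph]

theorem not_rel_inl_inr_of_underGraph_eq_sum {R : V ⊕ W → V ⊕ W → Prop} {G : SimpleGraph V}
    {H : SimpleGraph W} (hR : underGraph R = G ⊕g H) (x : V) (y : W) :
    ¬ R (inl x) (inr y) ∧ ¬ R (inr y) (inl x) := by
  have h := SimpleGraph.not_adj_sum_inl_inr (G := G) (H := H) x y
  rw [← hR] at h
  exact not_or.mp fun hxy => h ⟨inl_ne_inr, hxy⟩

theorem liftRel_onFun_eq {R : V ⊕ W → V ⊕ W → Prop} {G : SimpleGraph V} {H : SimpleGraph W}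
    (hR : underGraph R = G ⊕g H) : LiftRel (R on inl) (R on inr) = R := by
  ext (x | y) (x' | y')
  · simp [onFun]
  · simpa using (not_rel_inl_inr_of_underGraph_eq_sum hR x y').1
  · simpa using (not_rel_inl_inr_of_underGraph_eq_sum hR x' y).2
  · simp [onFun]

variable (G : SimpleGraph V) (H : SimpleGraph W)

def graphPreorderSumEquiv : GraphPreorder (G ⊕g H) ≃ GraphPreorder G × GraphPreorder H where
  toFun R :=
    (⟨R.1 on inl, R.2.1.onFun inl, by rw [underGraph_onFun inl_injective, R.2.2]; ext; simp⟩,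
     ⟨R.1 on inr, R.2.1.onFun inr, by rw [underGraph_onFun inr_injective, R.2.2]; ext; simp⟩)
  invFun PQ :=
    ⟨LiftRel PQ.1.1 PQ.2.1, PQ.1.2.1.liftRel PQ.2.2.1,
      by rw [underGraph_liftRel, PQ.1.2.2, PQ.2.2.2]⟩
  left_inv R := Subtype.ext (liftRel_onFun_eq R.2.2)
  right_inv PQ := by ext <;> simp [onFun]

theorem underGraph_adj_congr {R : V → V → Prop} {R' : V' → V' → Prop} (σ : V ≃ V')
    (hσ : ∀ x y, R x y ↔ R' (σ x) (σ y)) (x y : V) :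
    (underGraph R').Adj (σ x) (σ y) ↔ (underGraph R).Adj x y := by
  simp [underGraph, hσ]

variable {G H} in
theorem preSetoid_sum_iff (hG : G.Connected) (hH : H.Connected) (hni : ¬ Nonempty (G ≃g H))
    (R R' : GraphPreorder (G ⊕g H)) :
    preSetoid (G ⊕g H) R R' ↔ (preSetoid G).prod (preSetoid H)
      (graphPreorderSumEquiv G H R) (graphPreorderSumEquiv G H R') := by
  constructor
  · rintro ⟨σ, hσ⟩
    let σG : G ⊕g H ≃g G ⊕g H :=
      ⟨σ, fun {a b} => by simpa only [R.2.2, R'.2.2] using underGraph_adj_congr σ hσ a b⟩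
    obtain ⟨τ₁, τ₂, hτ⟩ := σG.exists_eq_sumCongr_of_not_iso hG hH hni
    have hστ (a : V ⊕ W) : σ a = Sum.map τ₁ τ₂ a := DFunLike.congr_fun hτ a
    refine ⟨⟨τ₁, fun x y => ?_⟩, ⟨τ₂, fun x y => ?_⟩⟩
    · exact (hσ (inl x) (inl y)).trans (by rw [hστ, hστ]; exact .rfl)
    · exact (hσ (inr x) (inr y)).trans (by rw [hστ, hστ]; exact .rfl)
  · rintro ⟨⟨τ₁, h₁⟩, ⟨τ₂, h₂⟩⟩
    refine ⟨τ₁.sumCongr τ₂, ?_⟩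
    rintro (x | y) (x' | y')
    · exact h₁ x x'
    · exact iff_of_false (not_rel_inl_inr_of_underGraph_eq_sum R.2.2 x y').1
        (not_rel_inl_inr_of_underGraph_eq_sum R'.2.2 _ _).1
    · exact iff_of_false (not_rel_inl_inr_of_underGraph_eq_sum R.2.2 x' y).2
        (not_rel_inl_inr_of_underGraph_eq_sum R'.2.2 _ _).2
    · exact h₂ y y'

end Preorder

theorem hbar_sum_of_not_iso_general
    {V W : Type*}
    (G : SimpleGraph V) (H : SimpleGraph W)
    (hG : G.Connected) (hH : H.Connected)
    (hni : ¬ Nonempty (G ≃g H)) :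
    hbar (G ⊕g H) = hbar G * hbar H := by
  let e : Quotient (preSetoid (G ⊕g H)) ≃ Quotient (preSetoid G) × Quotient (preSetoid H) :=
    (Quotient.congr (graphPreorderSumEquiv G H) (preSetoid_sum_iff hG hH hni)).trans
      (Setoid.prodQuotientEquiv _ _).symm
  rw [hbar, hbar, hbar, Nat.card_congr e, Nat.card_prod]

/-- For connected, non-isomorphic graphs `G` and `H`, `ℏ` is multiplicative over the
disjoint union. -/
theorem hbar_sum_of_not_iso
    {V W : Type*} [Fintype V] [Fintype W]
    (G : SimpleGraph V) (H : SimpleGraph W)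
    (hG : G.Connected) (hH : H.Connected)
    (hni : ¬ Nonempty (G ≃g H)) :
    hbar (G ⊕g H) = hbar G * hbar H :=
  hbar_sum_of_not_iso_general G H hG hH hni
end

section
/- For every odd natural number n ≥ 3, there is no preorder relation on Fin 2 × Fin n whose underlying graph equals the box product K₂ □ Cₙ of the complete graph on Fin 2 with the cycle graph on Fin n; that is, τ(K₂ □ Cₙ) = 0. -/
/-!
In the underlying graph of a preorder, an induced path `x - y - z` can never be traversed
monotonically, so its middle vertex is a common source or a common sink. Around an induced
square this forces opposite edges to point in opposite directions. In `K₂ □ H` every edge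
`v - w` of `H` spans the induced square `(0,v), (1,v), (1,w), (0,w)`, so the orientation of the
rungs `(0,v) - (1,v)` flips along each edge of `H` and is a proper 2-colouring of `H`.
An odd cycle has none.
-/

open SimpleGraph

namespace IsPreorderRel

variable {V : Type*} {R : V → V → Prop} {a b c d x y z : V}

theorem rel_of_rel_of_not_adj (hR : IsPreorderRel R) (hyz : (underGraph R).Adj y z)
    (hxz : x ≠ z) (hnxz : ¬(underGraph R).Adj x z) (hxy : R x y) : R z y :=
  hyz.2.resolve_left fun h => hnxz ⟨hxz, .inl (hR.2 hxy h)⟩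

theorem rel_of_rel_of_not_adj' (hR : IsPreorderRel R) (hyz : (underGraph R).Adj y z)
    (hxz : x ≠ z) (hnxz : ¬(underGraph R).Adj x z) (hyx : R y x) : R y z :=
  hyz.2.resolve_right fun h => hnxz ⟨hxz, .inr (hR.2 h hyx)⟩

theorem not_rel_of_not_adj (hR : IsPreorderRel R) (hyz : (underGraph R).Adj y z)
    (hxz : x ≠ z) (hnxz : ¬(underGraph R).Adj x z) (hxy : R x y) : ¬R y x := fun hyx =>
  hnxz ⟨hxz, .inr (hR.2 (hR.rel_of_rel_of_not_adj hyz hxz hnxz hxy) hyx)⟩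

theorem rel_of_square (hR : IsPreorderRel R) (hac : (underGraph R).Adj a c)
    (hcd : (underGraph R).Adj c d) (had : a ≠ d) (hnad : ¬(underGraph R).Adj a d)
    (hbc : b ≠ c) (hnbc : ¬(underGraph R).Adj b c) (hab : R a b) : R d c :=
  hR.rel_of_rel_of_not_adj hcd had hnad (hR.rel_of_rel_of_not_adj' hac hbc hnbc hab)

end IsPreorderRel

theorem colorable_two_of_underGraph_eq_boxProd {W : Type*} {H : SimpleGraph W}
    {R : Fin 2 × W → Fin 2 × W → Prop} (hR : IsPreorderRel R)
    (hG : underGraph R = (⊤ : SimpleGraph (Fin 2)) □ H) : H.Colorable 2 := by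
  have rung_orient : ∀ {v w}, H.Adj v w → ∀ {i j : Fin 2}, i ≠ j →
      R (i, v) (j, v) → R (j, w) (i, w) ∧ ¬R (i, w) (j, w) := by
    intro v w hvw i j hij hv
    have hside : (underGraph R).Adj (i, v) (i, w) := by simp [hG, boxProd_adj, hvw]
    have hrung : (underGraph R).Adj (i, w) (j, w) := by simp [hG, boxProd_adj, hij]
    have hne : ((i, v) : Fin 2 × W) ≠ (j, w) := by simp [hij]
    have hnadj : ¬(underGraph R).Adj (i, v) (j, w) := by simp [hG, boxProd_adj, hij, hvw.ne]
    have hw := hR.rel_of_square hside hrung hne hnadj (by simp [hij.symm])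
      (by simp [hG, boxProd_adj, hij.symm, hvw.ne]) hv
    exact ⟨hw, hR.not_rel_of_not_adj hside.symm hne.symm (fun h => hnadj h.symm) hw⟩
  let C : H.Coloring Prop := Coloring.mk (fun v => R (0, v) (1, v)) fun {v w} hvw heq => by
    by_cases hv : R (0, v) (1, v)
    · exact (rung_orient hvw zero_ne_one hv).2 (heq ▸ hv)
    · have hv' : R (1, v) (0, v) :=
        (show (underGraph R).Adj (0, v) (1, v) by simp [hG, boxProd_adj]).2.resolve_left hv
      exact hv (heq ▸ (rung_orient hvw one_ne_zero hv').1)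
  simpa using C.colorable

theorem tau_boxProd_eq_zero_of_not_colorable {W : Type*} {H : SimpleGraph W}
    (hH : ¬H.Colorable 2) : tau ((⊤ : SimpleGraph (Fin 2)) □ H) = 0 := by
  rw [tau, Nat.card_eq_zero]
  exact .inl ⟨fun ⟨_, hR, hG⟩ => hH (colorable_two_of_underGraph_eq_boxProd hR hG)⟩

/-- For odd `n ≥ 3`, no preorder relation has underlying graph `K₂ □ Cₙ`. -/
theorem tau_K2_boxProd_cycle_odd
    (n : ℕ) (h3 : 3 ≤ n) (hodd : Odd n) :
    tau ((⊤ : SimpleGraph (Fin 2)) □ SimpleGraph.cycleGraph n) = 0 := by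
  refine tau_boxProd_eq_zero_of_not_colorable fun h => ?_
  have := h.chromaticNumber_le
  rw [chromaticNumber_cycleGraph_of_odd n (by omega) hodd] at this
  norm_num at this
end

section
/- Let G be a connected simple graph on a finite vertex type V with at least 2 vertices and H a connected simple graph on a finite vertex type W with at least 2 vertices. If G is not bipartite (not 2-colorable) or H is not bipartite, then τ(G □ H) = 0. -/
/-- In a square `a - b - c - d - a` of a transitive relation whose diagonals are unrelated,
the opposite sides `ab` and `dc` point in opposite directions. -/
lemma rel_ne_rel_of_square {α : Type*} {R : α → α → Prop} (hR : Transitive R) {a b c d : α}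
    (hab : R a b ∨ R b a) (hbc : R b c ∨ R c b) (hdc : R d c ∨ R c d) (had : R a d ∨ R d a)
    (hac : ¬ R a c) (hca : ¬ R c a) (hbd : ¬ R b d) (hdb : ¬ R d b) :
    R a b ≠ R d c := by
  intro heq
  by_cases h : R a b
  · have h' : R d c := heq ▸ h
    rcases hbc with hbc | hcb
    · exact hac (hR h hbc)
    · exact hdb (hR h' hcb)
  · have hba : R b a := hab.resolve_left h
    have hcd : R c d := hdc.resolve_left (heq ▸ h)
    rcases had with had | hda
    · exact hbd (hR hba had)
    · exact hca (hR hcd hda)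

section BoxProd

open SimpleGraph

variable {V W : Type*} {G : SimpleGraph V} {H : SimpleGraph W} {R : V × W → V × W → Prop}

lemma rel_or_rel_of_boxProd_adj (hRG : underGraph R = G □ H) {x y : V × W}
    (hxy : (G □ H).Adj x y) : R x y ∨ R y x :=
  (hRG ▸ hxy : (underGraph R).Adj x y).2

lemma not_rel_of_ne_of_ne (hRG : underGraph R = G □ H) {u u' : V} {w w' : W}
    (hu : u ≠ u') (hw : w ≠ w') : ¬ R (u, w) (u', w') := by
  intro hr
  have hadj : (G □ H).Adj (u, w) (u', w') := hRG ▸ ⟨fun h => hu congr($h.1), Or.inl hr⟩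
  rcases hadj with ⟨-, h⟩ | ⟨-, h⟩
  exacts [hw h, hu h]

lemma colorable_two_left_of_underGraph_eq_boxProd (hR : Transitive R)
    (hRG : underGraph R = G □ H) {w w' : W} (hw : H.Adj w w') : G.Colorable 2 := by
  have hprop : ∀ {u u'}, G.Adj u u' → R (u, w) (u, w') ≠ R (u', w) (u', w') := by
    intro u u' hu
    have hrel : ∀ {x y}, (G □ H).Adj x y → R x y ∨ R y x := rel_or_rel_of_boxProd_adj hRG
    have hnrel : ∀ {u u' : V} {w w' : W}, u ≠ u' → w ≠ w' → ¬ R (u, w) (u', w') :=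
      not_rel_of_ne_of_ne hRG
    exact rel_ne_rel_of_square hR (hrel (boxProd_adj_right.2 hw))
      (hrel (boxProd_adj_left.2 hu)) (hrel (boxProd_adj_right.2 hw))
      (hrel (boxProd_adj_left.2 hu)) (hnrel hu.ne hw.ne) (hnrel hu.ne.symm hw.ne.symm)
      (hnrel hu.ne hw.ne.symm) (hnrel hu.ne.symm hw.ne)
  simpa using (Coloring.mk (fun u => R (u, w) (u, w')) hprop).colorable

lemma colorable_two_right_of_underGraph_eq_boxProd (hR : Transitive R)
    (hRG : underGraph R = G □ H) {u u' : V} (hu : G.Adj u u') : H.Colorable 2 := by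
  have hprop : ∀ {w w'}, H.Adj w w' → R (u, w) (u', w) ≠ R (u, w') (u', w') := by
    intro w w' hw
    have hrel : ∀ {x y}, (G □ H).Adj x y → R x y ∨ R y x := rel_or_rel_of_boxProd_adj hRG
    have hnrel : ∀ {u u' : V} {w w' : W}, u ≠ u' → w ≠ w' → ¬ R (u, w) (u', w') :=
      not_rel_of_ne_of_ne hRG
    exact rel_ne_rel_of_square hR (hrel (boxProd_adj_left.2 hu))
      (hrel (boxProd_adj_right.2 hw)) (hrel (boxProd_adj_left.2 hu))
      (hrel (boxProd_adj_right.2 hw)) (hnrel hu.ne hw.ne) (hnrel hu.ne.symm hw.ne.symm)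
      (hnrel hu.ne.symm hw.ne) (hnrel hu.ne hw.ne.symm)
  simpa using (Coloring.mk (fun w => R (u, w) (u', w)) hprop).colorable

end BoxProd

lemma SimpleGraph.Connected.exists_adj_of_two_le_card {V : Type*} [Fintype V]
    {G : SimpleGraph V} (hG : G.Connected) (hV : 2 ≤ Fintype.card V) : ∃ u u', G.Adj u u' :=
  have : Nontrivial V := Fintype.one_lt_card_iff_nontrivial.mp hV
  let ⟨u⟩ := hG.nonempty
  ⟨u, hG.preconnected.exists_adj_of_nontrivial u⟩

/-- If `G` or `H` is not bipartite (both connected, each with at least 2 vertices),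
then `τ(G □ H) = 0`. -/
theorem tau_boxProd_of_not_bipartite
    {V W : Type*} [Fintype V] [Fintype W]
    (G : SimpleGraph V) (H : SimpleGraph W)
    (hG : G.Connected) (hH : H.Connected)
    (hV : 2 ≤ Fintype.card V) (hW : 2 ≤ Fintype.card W)
    (h : ¬ G.Colorable 2 ∨ ¬ H.Colorable 2) :
    tau (G □ H) = 0 := by
  refine Nat.card_eq_zero.2 (Or.inl ⟨fun ⟨R, ⟨_, hR⟩, hRG⟩ => ?_⟩)
  rcases h with hG2 | hH2
  · obtain ⟨w, w', hw⟩ := hH.exists_adj_of_two_le_card hW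
    exact hG2 (colorable_two_left_of_underGraph_eq_boxProd hR hRG hw)
  · obtain ⟨u, u', hu⟩ := hG.exists_adj_of_two_le_card hV
    exact hH2 (colorable_two_right_of_underGraph_eq_boxProd hR hRG hu)
end

section
/- Let G be a connected simple graph on a finite vertex type V and let v ∈ V be a cut vertex of G, i.e., the induced subgraph of G on V \ {v} is not connected. Then for every preorder relation R on V whose underlying graph equals G, the vertex v is a sink of R or a source of R. -/
namespace SimpleGraph

variable {V : Type*} {G : SimpleGraph V} {v : V}

theorem Preconnected.induce_ne_of_reachable_neighbors (hG : G.Preconnected)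
    (hv : ∀ x y (hx : x ≠ v) (hy : y ≠ v), G.Adj x v → G.Adj v y →
      (G.induce {u | u ≠ v}).Reachable ⟨x, hx⟩ ⟨y, hy⟩) :
    (G.induce {u | u ≠ v}).Preconnected := by
  rintro ⟨x, hx⟩ ⟨y, hy⟩
  -- Along a walk from `x`, either the current vertex `u ≠ v` is reachable from `x` avoiding `v`,
  -- or `u = v` and the previous vertex `z` is.
  suffices ∀ u, Relation.ReflTransGen G.Adj x u →
      (∃ hu : u ≠ v, (G.induce {u | u ≠ v}).Reachable ⟨x, hx⟩ ⟨u, hu⟩) ∨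
      (u = v ∧ ∃ z, ∃ hz : z ≠ v, G.Adj z v ∧
        (G.induce {u | u ≠ v}).Reachable ⟨x, hx⟩ ⟨z, hz⟩) by
    rcases this y ((reachable_iff_reflTransGen x y).mp (hG x y)) with ⟨_, hxy⟩ | ⟨rfl, -⟩
    exacts [hxy, absurd rfl hy]
  intro u hxu
  induction hxu with
  | refl => exact Or.inl ⟨hx, .rfl⟩
  | @tail u w _ huw ih =>
    rcases ih with ⟨hu, hxu⟩ | ⟨rfl, z, hz, hzv, hxz⟩
    · by_cases hw : w = v
      · exact Or.inr ⟨hw, u, hu, hw ▸ huw, hxu⟩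
      · exact Or.inl ⟨hw, hxu.trans (Adj.reachable (G := G.induce _) huw)⟩
    · exact Or.inl ⟨huw.ne', hxz.trans (hv z w hz huw.ne' hzv huw)⟩

end SimpleGraph

section underGraph

variable {V : Type*} {R : V → V → Prop}

theorem reachable_induce_underGraph_of_rel {s : Set V} {x y : s} (h : R x y) :
    ((underGraph R).induce s).Reachable x y := by
  by_cases hxy : x = y
  · exact hxy ▸ .rfl
  · exact SimpleGraph.Adj.reachable (G := (underGraph R).induce s)
      ⟨fun h => hxy (Subtype.ext h), Or.inl h⟩

theorem reachable_induce_ne_of_adj_of_adj (htrans : ∀ ⦃p q r⦄, R p q → R q r → R p r)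
    {v a b : V} (ha : a ≠ v) (hb : b ≠ v) (hva : R v a) (hbv : R b v)
    {x y : V} (hx : x ≠ v) (hy : y ≠ v)
    (hxv : (underGraph R).Adj x v) (hvy : (underGraph R).Adj v y) :
    ((underGraph R).induce {u | u ≠ v}).Reachable ⟨x, hx⟩ ⟨y, hy⟩ := by
  have reach {p q : V} (hp : p ≠ v) (hq : q ≠ v) (hpq : R p q) :
      ((underGraph R).induce {u | u ≠ v}).Reachable ⟨p, hp⟩ ⟨q, hq⟩ :=
    reachable_induce_underGraph_of_rel (s := {u | u ≠ v}) hpq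
  rcases hxv.2, hvy.2 with ⟨hxv | hvx, hvy | hyv⟩
  · exact reach hx hy (htrans hxv hvy)
  · exact (reach hx ha (htrans hxv hva)).trans (reach hy ha (htrans hyv hva)).symm
  · exact (reach hb hx (htrans hbv hvx)).symm.trans (reach hb hy (htrans hbv hvy))
  · exact (reach hy hx (htrans hyv hvx)).symm

end underGraph

theorem cutVertex_sink_or_source_general
    {V : Type*} (G : SimpleGraph V) (hc : G.Connected) (v : V)
    (hcut : ¬ (G.induce {u : V | u ≠ v}).Connected)
    (R : V → V → Prop) (hR : IsPreorderRel R) (hRG : underGraph R = G) :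
    (∀ u : V, u ≠ v → ¬ R v u) ∨ (∀ u : V, u ≠ v → ¬ R u v) := by
  by_contra! ⟨⟨a, ha, hva⟩, ⟨b, hb, hbv⟩⟩
  subst hRG
  have : Nonempty {u : V | u ≠ v} := ⟨⟨a, ha⟩⟩
  exact hcut ⟨hc.preconnected.induce_ne_of_reachable_neighbors fun _ _ hx hy hxv hvy =>
    reachable_induce_ne_of_adj_of_adj hR.2 ha hb hva hbv hx hy hxv hvy⟩

/-- A cut vertex of a connected graph is a sink or a source in every preorder relation
having that graph as its underlying graph. -/
theorem cutVertex_sink_or_source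
    {V : Type*} [Fintype V] (G : SimpleGraph V) (hc : G.Connected) (v : V)
    (hcut : ¬ (G.induce {u : V | u ≠ v}).Connected)
    (R : V → V → Prop) (hR : IsPreorderRel R) (hRG : underGraph R = G) :
    (∀ u : V, u ≠ v → ¬ R v u) ∨ (∀ u : V, u ≠ v → ¬ R u v) :=
  cutVertex_sink_or_source_general G hc v hcut R hR hRG
end

section
/- For every natural number n ≥ 1, the number of isomorphism classes of preorder relations on Fin n whose underlying graph is the complete graph on Fin n (equivalently, of total preorders on Fin n up to isomorphism) equals 2^(n-1). -/
open Finset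

theorem underGraph_eq_top_of_total {V : Type*} {R : V → V → Prop}
    (htot : ∀ x y, R x y ∨ R y x) : underGraph R = ⊤ := by
  ext x y
  exact ⟨fun h => h.1, fun h => ⟨h, htot x y⟩⟩

theorem total_of_underGraph_eq_top {V : Type*} {R : V → V → Prop} (hrefl : Reflexive R)
    (h : underGraph R = ⊤) (x y : V) : R x y ∨ R y x := by
  rcases eq_or_ne x y with rfl | hne
  · exact Or.inl (hrefl x)
  · exact (show (underGraph R).Adj x y from h ▸ hne).2

section DownCount

variable {V W : Type*}

noncomputable def downCount (R : V → V → Prop) (x : V) : ℕ :=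
  {z | R z x}.ncard

theorem downCount_eq_of_equiv {R : V → V → Prop} {R' : W → W → Prop} (σ : V ≃ W)
    (h : ∀ x y, R x y ↔ R' (σ x) (σ y)) (x : V) : downCount R' (σ x) = downCount R x := by
  have hpre : σ ⁻¹' {w | R' w (σ x)} = {z | R z x} := by ext z; simp [h]
  rw [downCount, downCount, ← hpre,
    Set.ncard_preimage_of_injective_subset_range σ.injective (by simp)]

theorem image_downCount_eq_of_equiv [Fintype V] [Fintype W] {R : V → V → Prop}
    {R' : W → W → Prop} (σ : V ≃ W) (h : ∀ x y, R x y ↔ R' (σ x) (σ y)) :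
    univ.image (downCount R) = univ.image (downCount R') := by
  classical
  rw [← image_univ_equiv σ, image_image]
  congr 1
  funext x
  exact (downCount_eq_of_equiv σ h x).symm

variable [Finite V] {R : V → V → Prop}

theorem downCount_mem_Ioc (hrefl : Reflexive R) (x : V) :
    downCount R x ∈ Set.Ioc 0 (Nat.card V) :=
  ⟨(Set.ncard_pos).2 ⟨x, hrefl x⟩, Set.ncard_le_card _⟩

variable (htrans : Transitive R) (htot : ∀ x y, R x y ∨ R y x)
include htrans htot

theorem downCount_le_downCount_iff {x y : V} : downCount R x ≤ downCount R y ↔ R x y := by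
  refine ⟨fun hle => ?_, fun hxy => Set.ncard_le_ncard fun z hz => htrans hz hxy⟩
  by_contra hxy
  have hyx : R y x := (htot x y).resolve_left hxy
  have hssub : {z | R z y} ⊂ {z | R z x} :=
    (Set.ssubset_iff_of_subset fun z hz => htrans hz hyx).2 ⟨x, (htot x x).elim id id, hxy⟩
  exact (Set.ncard_lt_ncard hssub).not_ge hle

theorem exists_downCount_eq_card [Nonempty V] : ∃ x, downCount R x = Nat.card V := by
  obtain ⟨x, hx⟩ := Finite.exists_max (downCount R)
  refine ⟨x, ?_⟩
  have hall : {z | R z x} = Set.univ :=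
    Set.eq_univ_of_forall fun z => (downCount_le_downCount_iff htrans htot).1 (hx z)
  rw [downCount, hall, Set.ncard_univ]

end DownCount

section CumulativeCount

variable {n : ℕ}

/-- `Fin n` is cut into consecutive blocks, and `g i` is the length of the initial segment
ending with the block of `i`. -/
def IsCumulativeCount (g : Fin n → ℕ) : Prop :=
  ∀ i j, g j ≤ g i ↔ (j : ℕ) < g i

theorem IsCumulativeCount.eq_of_image_eq {g g' : Fin n → ℕ} (hg : IsCumulativeCount g)
    (hg' : IsCumulativeCount g') (h : univ.image g = univ.image g') : g = g' := by
  have key : ∀ {g g' : Fin n → ℕ}, IsCumulativeCount g → IsCumulativeCount g' →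
      univ.image g = univ.image g' → ∀ i, g' i ≤ g i := by
    intro g g' hg hg' h i
    obtain ⟨j, -, hj⟩ := mem_image.1 (h ▸ mem_image_of_mem g (mem_univ i))
    exact hj ▸ (hg' j i).2 (hj ▸ (hg i i).1 le_rfl)
  exact funext fun i => le_antisymm (key hg' hg h.symm i) (key hg hg' h i)

theorem isCumulativeCount_of_monotone {g : Fin n → ℕ} (hmono : Monotone g)
    (hcount : ∀ i, {j | g j ≤ g i}.ncard = g i) : IsCumulativeCount g := by
  intro i j
  constructor
  · intro hji
    have hle := Set.ncard_le_ncard (t := {k | g k ≤ g i})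
      fun k (hk : k ∈ Set.Iic j) => (hmono hk).trans hji
    rw [hcount, ← coe_Iic, Set.ncard_coe_finset, Fin.card_Iic] at hle
    omega
  · intro hj
    by_contra! hij
    have hle := Set.ncard_le_ncard (s := {k | g k ≤ g i}) (t := Set.Iio j)
      fun k (hk : g k ≤ g i) => lt_of_not_ge fun hjk => (hij.trans_le (hmono hjk)).not_ge hk
    rw [hcount, ← coe_Iio, Set.ncard_coe_finset, Fin.card_Iio] at hle
    omega

theorem isCumulativeCount_downCount_comp_sort {R : Fin n → Fin n → Prop}
    (htrans : Transitive R) (htot : ∀ x y, R x y ∨ R y x) :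
    IsCumulativeCount (downCount R ∘ Tuple.sort (downCount R)) := by
  set σ := Tuple.sort (downCount R)
  refine isCumulativeCount_of_monotone (Tuple.monotone_sort _) fun i => ?_
  have hpre :
      {j | (downCount R ∘ σ) j ≤ (downCount R ∘ σ) i} = σ ⁻¹' {z | R z (σ i)} := by
    ext j
    simp [downCount_le_downCount_iff htrans htot]
  rw [hpre, Set.ncard_preimage_of_injective_subset_range σ.injective (by simp)]
  rfl

theorem downCount_eq_of_isCumulativeCount {g : Fin n → ℕ} (hg : IsCumulativeCount g)
    (hle : ∀ i, g i ≤ n) : downCount (fun x y => g x ≤ g y) = g := by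
  funext i
  have hset : {j | g j ≤ g i} = ↑(univ.filter fun j : Fin n => (j : ℕ) < g i) := by
    ext j
    simp [hg i j]
  rw [downCount, hset, Set.ncard_coe_finset, Fin.card_filter_val_lt, min_eq_right (hle i)]

def blockEnd (S : Finset ℕ) (i : Fin n) : ℕ :=
  ((insert n S).filter ((i : ℕ) < ·)).min' ⟨n, by simp [i.isLt]⟩

variable {S : Finset ℕ}

theorem blockEnd_mem (i : Fin n) : blockEnd S i ∈ insert n S :=
  (mem_filter.1 (min'_mem _ _)).1

theorem lt_blockEnd (i : Fin n) : (i : ℕ) < blockEnd S i :=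
  (mem_filter.1 (min'_mem _ _)).2

theorem blockEnd_le_of_lt {i : Fin n} {s : ℕ} (hs : s ∈ insert n S) (hi : (i : ℕ) < s) :
    blockEnd S i ≤ s :=
  min'_le _ _ (mem_filter.2 ⟨hs, hi⟩)

theorem blockEnd_le (i : Fin n) : blockEnd S i ≤ n :=
  blockEnd_le_of_lt (mem_insert_self n S) i.isLt

theorem isCumulativeCount_blockEnd : IsCumulativeCount (blockEnd (n := n) S) := fun i j =>
  ⟨fun h => (lt_blockEnd j).trans_le h, fun h => blockEnd_le_of_lt (blockEnd_mem i) h⟩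

theorem image_blockEnd (hn : 0 < n) (hS : S ⊆ Ioo 0 n) :
    univ.image (blockEnd (n := n) S) = insert n S := by
  refine Subset.antisymm (image_subset_iff.2 fun i _ => blockEnd_mem i) fun s hs => ?_
  have hs' : 0 < s ∧ s ≤ n := by
    rcases mem_insert.1 hs with rfl | hs
    · exact ⟨hn, le_rfl⟩
    · have := mem_Ioo.1 (hS hs)
      omega
  let i : Fin n := ⟨s - 1, by omega⟩
  have hi : (i : ℕ) = s - 1 := rfl
  refine mem_image.2 ⟨i, mem_univ i, le_antisymm (blockEnd_le_of_lt hs (by omega)) ?_⟩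
  have := lt_blockEnd (S := S) i
  omega

end CumulativeCount

section TotalPreorders

variable {n : ℕ}

theorem exists_equiv_of_image_downCount_eq {R R' : Fin n → Fin n → Prop}
    (htrans : Transitive R) (htot : ∀ x y, R x y ∨ R y x)
    (htrans' : Transitive R') (htot' : ∀ x y, R' x y ∨ R' y x)
    (h : univ.image (downCount R) = univ.image (downCount R')) :
    ∃ τ : Fin n ≃ Fin n, ∀ x y, R x y ↔ R' (τ x) (τ y) := by
  set σ := Tuple.sort (downCount R)
  set σ' := Tuple.sort (downCount R')
  have hsorted : downCount R ∘ σ = downCount R' ∘ σ' :=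
    (isCumulativeCount_downCount_comp_sort htrans htot).eq_of_image_eq
      (isCumulativeCount_downCount_comp_sort htrans' htot')
      (by rw [← image_image, image_univ_equiv, h, ← image_image, image_univ_equiv])
  have hτ : ∀ x, downCount R' ((σ.symm.trans σ') x) = downCount R x := fun x => by
    simpa using congrFun hsorted.symm (σ.symm x)
  refine ⟨σ.symm.trans σ', fun x y => ?_⟩
  rw [← downCount_le_downCount_iff htrans htot, ← downCount_le_downCount_iff htrans' htot',
    hτ, hτ]

theorem image_downCount_erase_subset {R : Fin n → Fin n → Prop} (hrefl : Reflexive R) :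
    (univ.image (downCount R)).erase n ⊆ Ioo 0 n := by
  intro s hs
  obtain ⟨hsn, hs⟩ := mem_erase.1 hs
  obtain ⟨x, -, rfl⟩ := mem_image.1 hs
  have hx := downCount_mem_Ioc hrefl x
  rw [Nat.card_fin] at hx
  exact mem_Ioo.2 ⟨hx.1, lt_of_le_of_ne hx.2 hsn⟩

theorem mem_image_downCount (hn : 0 < n) {R : Fin n → Fin n → Prop} (htrans : Transitive R)
    (htot : ∀ x y, R x y ∨ R y x) : n ∈ univ.image (downCount R) := by
  have : Nonempty (Fin n) := ⟨⟨0, hn⟩⟩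
  obtain ⟨x, hx⟩ := exists_downCount_eq_card htrans htot
  exact mem_image.2 ⟨x, mem_univ x, hx.trans (Nat.card_fin n)⟩

noncomputable def blockSet (n : ℕ) :
    Quotient (preSetoid (⊤ : SimpleGraph (Fin n))) → (Ioo 0 n).powerset :=
  Quotient.lift
    (fun R => ⟨(univ.image (downCount R.1)).erase n,
      mem_powerset.2 (image_downCount_erase_subset R.2.1.1)⟩)
    fun _ _ ⟨σ, h⟩ => by simp only [image_downCount_eq_of_equiv σ h]

theorem blockSet_injective (hn : 0 < n) : Function.Injective (blockSet n) := by
  refine Quotient.ind₂ fun R R' h => Quotient.sound ?_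
  have htot := total_of_underGraph_eq_top R.2.1.1 R.2.2
  have htot' := total_of_underGraph_eq_top R'.2.1.1 R'.2.2
  refine exists_equiv_of_image_downCount_eq R.2.1.2 htot R'.2.1.2 htot' ?_
  rw [← insert_erase (mem_image_downCount hn R.2.1.2 htot),
    ← insert_erase (mem_image_downCount hn R'.2.1.2 htot')]
  exact congrArg (insert n) (congrArg Subtype.val h)

theorem blockSet_surjective (hn : 0 < n) : Function.Surjective (blockSet n) := by
  rintro ⟨T, hT⟩
  have hT : T ⊆ Ioo 0 n := mem_powerset.1 hT
  let R : Fin n → Fin n → Prop := fun x y => blockEnd T x ≤ blockEnd T y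
  have hR : IsPreorderRel R := ⟨fun _ => le_rfl, fun _ _ _ => le_trans⟩
  refine ⟨⟦⟨R, hR, underGraph_eq_top_of_total fun x y => le_total _ _⟩⟧, Subtype.ext ?_⟩
  change (univ.image (downCount R)).erase n = T
  rw [downCount_eq_of_isCumulativeCount isCumulativeCount_blockEnd blockEnd_le,
    image_blockEnd hn hT, erase_insert fun h => lt_irrefl n (mem_Ioo.1 (hT h)).2]

end TotalPreorders

/-- The number of isomorphism classes of preorder relations on `Fin n` whose underlying
graph is the complete graph equals `2 ^ (n - 1)`. -/
theorem hbar_completeGraph (n : ℕ) (hn : 1 ≤ n) :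
    hbar (⊤ : SimpleGraph (Fin n)) = 2 ^ (n - 1) := by
  rw [hbar,
    Nat.card_congr (Equiv.ofBijective _ ⟨blockSet_injective hn, blockSet_surjective hn⟩),
    Nat.card_eq_finsetCard, card_powerset, Nat.card_Ioo, Nat.sub_zero]
end
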